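/- The rank-4 Hermitian lattice over Z[√−1] defined by Iyanaga's matrix A = (1/2)·[[2, −i, −i, 1],[i, 2, 1, i],[i, 1, 2, 1],[1, −i, 1, 2]] (i = √−1) has an even unimodular positive definite trace form of rank 8; consequently, this trace lattice is isometric to E8. -/

import Mathlib

noncomputable section
open Complex Matrix

/-- Iyanaga's matrix: the Gram matrix of a rank-4 Hermitian lattice over `ℤ[√−1]`. -/
def A16 : Matrix (Fin 4) (Fin 4) ℂ :=
  (1/2 : ℂ) • !![2, -I, -I, 1; I, 2, 1, I; I, 1, 2, 1; 1, -I, 1, 2]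

/-- The Hermitian form `⟨x,y⟩ = xᵀ A ȳ` on `ℤ[i]⁴`. -/
def herm16 (x y : Fin 4 → ℂ) : ℂ := ∑ j, ∑ k, x j * A16 j k * starRingEnd ℂ (y k)

/-- `ℤ`-basis `e₁, i·e₁, e₂, i·e₂, e₃, i·e₃, e₄, i·e₄` of the underlying `ℤ`-module. -/
def bas16 : Fin 8 → Fin 4 → ℂ :=
  ![![1,0,0,0], ![I,0,0,0], ![0,1,0,0], ![0,I,0,0],
    ![0,0,1,0], ![0,0,I,0], ![0,0,0,1], ![0,0,0,I]]

/-- Gram matrix of the trace form `(x,y) = Tr_{F/ℚ}⟨x,y⟩` on the underlying `ℤ^8`. -/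
def T16 : Matrix (Fin 8) (Fin 8) ℂ := fun j k =>
  herm16 (bas16 j) (bas16 k) + starRingEnd ℂ (herm16 (bas16 j) (bas16 k))

/-- A Gram matrix of the `E₈` root lattice. -/
def E8Mat : Matrix (Fin 8) (Fin 8) ℤ :=
  !![2, 0, -1, 0, 0, 0, 0, 0;
     0, 2, 0, -1, 0, 0, 0, 0;
     -1, 0, 2, -1, 0, 0, 0, 0;
     0, -1, -1, 2, -1, 0, 0, 0;
     0, 0, 0, -1, 2, -1, 0, 0;
     0, 0, 0, 0, -1, 2, -1, 0;
     0, 0, 0, 0, 0, -1, 2, -1;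
     0, 0, 0, 0, 0, 0, -1, 2]

/-!
In the `ℤ`-basis `bas16` the trace form has an explicit integral Gram matrix `T` with diagonal
entries `2`. An integral inverse of `T` shows that it is unimodular; a factorisation
`Mᵀ M = 4 T`, in which the columns of `M / 2` are vectors of `E₈` in its standard coordinates in
`ℝ⁸`, shows that it is positive definite; and an explicit unimodular change of basis carries `T`
to the Gram matrix `E8Mat`.
-/

theorem Matrix.det_map_intCast_eq_one_or_neg_one {n : Type*} [Fintype n] [DecidableEq n]
    {R : Type*} [CommRing R] {S T : Matrix n n ℤ} (h : S * T = 1) :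
    (T.map (Int.cast : ℤ → R)).det = 1 ∨ (T.map (Int.cast : ℤ → R)).det = -1 := by
  rw [← Int.cast_det]
  rcases Int.isUnit_iff.mp (isUnit_det_of_left_inverse h) with hdet | hdet <;> simp [hdet]

theorem Matrix.posDef_of_transpose_mul_self_eq_smul {m n : Type*} [Fintype m] [Fintype n]
    [DecidableEq n] {M : Matrix m n ℝ} {T : Matrix n n ℝ} {c : ℝ} (hc : 0 < c)
    (hMT : Mᵀ * M = c • T) (hT : IsUnit T) : T.PosDef := by
  have hinj : Function.Injective M.mulVec := by
    refine Function.Injective.of_comp (f := Mᵀ.mulVec) ?_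
    have : Function.Injective (c • T).mulVec :=
      mulVec_injective_iff_isUnit.2 (hT.smul hc.ne'.isUnit.unit)
    simpa only [← hMT, Function.comp_def, mulVec_mulVec] using this
  have hpos := (PosDef.conjTranspose_mul_self M hinj).smul (inv_pos.2 hc)
  rwa [conjTranspose_eq_transpose_of_trivial, hMT, smul_smul, inv_mul_cancel₀ hc.ne', one_smul]
    at hpos

theorem Matrix.PosDef.sum_mul_mul_pos {n : Type*} [Fintype n] {T : Matrix n n ℝ} (hT : T.PosDef)
    {v : n → ℝ} (hv : v ≠ 0) : 0 < ∑ j, ∑ k, v j * T j k * v k := by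
  simpa [dotProduct, mulVec, Finset.mul_sum, mul_assoc] using hT.dotProduct_mulVec_pos hv

theorem Matrix.map_intCast_mul {l m n R : Type*} [Fintype m] [Ring R]
    (M : Matrix l m ℤ) (N : Matrix m n ℤ) :
    (M * N).map (Int.cast : ℤ → R) = M.map (Int.cast : ℤ → R) * N.map (Int.cast : ℤ → R) :=
  Matrix.map_mul (f := Int.castRingHom R)

def traceGramInt : Matrix (Fin 8) (Fin 8) ℤ :=
  !![2, 0, 0, -1, 0, -1, 1, 0;
     0, 2, 1, 0, 1, 0, 0, 1;
     0, 1, 2, 0, 1, 0, 0, 1;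
     -1, 0, 0, 2, 0, 1, -1, 0;
     0, 1, 1, 0, 2, 0, 1, 0;
     -1, 0, 0, 1, 0, 2, 0, 1;
     1, 0, 0, -1, 1, 0, 2, 0;
     0, 1, 1, 0, 0, 1, 0, 2]

theorem T16_eq_map_traceGramInt : T16 = traceGramInt.map (Int.cast : ℤ → ℂ) := by
  ext j k
  fin_cases j <;> fin_cases k <;>
    simp [T16, herm16, Fin.sum_univ_four, A16, bas16, traceGramInt, Complex.ext_iff] <;> norm_num

def traceGramIntInv : Matrix (Fin 8) (Fin 8) ℤ :=
  !![2, 0, 0, -1, 1, 2, -2, -1;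
     0, 2, 1, 0, -2, 1, 1, -2;
     0, 1, 2, 0, -2, 1, 1, -2;
     -1, 0, 0, 2, -1, -2, 2, 1;
     1, -2, -2, -1, 4, 0, -3, 2;
     2, 1, 1, -2, 0, 4, -2, -3;
     -2, 1, 1, 2, -3, -2, 4, 0;
     -1, -2, -2, 1, 2, -3, 0, 4]

theorem traceGramIntInv_mul : traceGramIntInv * traceGramInt = 1 := by decide

def doubledE8Vectors : Matrix (Fin 8) (Fin 8) ℤ :=
  !![2, 2, 1, -1, 1, -1, 1, 1;
     2, -2, -1, -1, -1, -1, 1, -1;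
     0, 0, 1, 1, 1, 1, 1, 1;
     0, 0, 1, 1, 1, -1, -1, -1;
     0, 0, 1, 1, -1, 1, -1, 1;
     0, 0, 1, -1, 1, 1, 1, 1;
     0, 0, 1, -1, 1, -1, 1, -1;
     0, 0, -1, 1, 1, 1, 1, -1]

theorem doubledE8Vectors_transpose_mul_self :
    doubledE8Vectorsᵀ * doubledE8Vectors = (4 : ℤ) • traceGramInt := by decide

theorem traceGramInt_posDef : (traceGramInt.map (Int.cast : ℤ → ℝ)).PosDef := by
  refine posDef_of_transpose_mul_self_eq_smul (M := doubledE8Vectors.map Int.cast)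
    (c := 4) four_pos ?_ ?_
  · rw [← transpose_map, ← map_intCast_mul, doubledE8Vectors_transpose_mul_self]
    ext j k
    simp only [map_apply, Matrix.smul_apply, smul_eq_mul, Int.cast_mul, Int.cast_ofNat]
  · refine IsUnit.of_mul_eq_one_right (traceGramIntInv.map Int.cast) ?_
    rw [← map_intCast_mul, traceGramIntInv_mul, Matrix.map_one _ Int.cast_zero Int.cast_one]

def toE8Basis : Matrix (Fin 8) (Fin 8) ℤ :=
  !![-2, 0, 1, 0, 0, 0, 0, 0;
     0, -2, 0, 1, 0, 0, 0, 0;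
     0, -1, -1, 1, 0, 0, 0, 0;
     1, 0, -1, 0, 0, 0, 1, 0;
     -1, 2, 1, -1, 0, 0, -1, 1;
     -2, -1, 1, 0, 1, 0, -1, 0;
     2, -1, -2, 1, 0, 0, 1, -1;
     1, 2, 0, -1, -1, 1, 0, 0]

def toE8BasisInv : Matrix (Fin 8) (Fin 8) ℤ :=
  !![0, 1, -1, 0, 1, 0, 1, 0;
     1, 1, -1, 0, 2, 0, 2, 0;
     1, 2, -2, 0, 2, 0, 2, 0;
     2, 3, -2, 0, 4, 0, 4, 0;
     1, 2, -2, 1, 3, 1, 3, 0;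
     1, 2, -1, 1, 2, 1, 2, 1;
     1, 1, -1, 1, 1, 0, 1, 0;
     0, 1, 0, 1, 1, 0, 0, 0]

theorem toE8BasisInv_mul : toE8BasisInv * toE8Basis = 1 := by decide

theorem toE8Basis_transpose_mul_traceGramInt_mul :
    toE8Basisᵀ * traceGramInt * toE8Basis = E8Mat := by decide

/-- The rank-4 Hermitian lattice over `ℤ[√−1]` defined by Iyanaga's matrix
`A = (1/2)·[[2,−i,−i,1],[i,2,1,i],[i,1,2,1],[1,−i,1,2]]` has an integral, even,
unimodular, positive definite trace form of rank 8; consequently this trace lattice is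
isometric to `E₈`. -/
theorem stmt_16 :
    (∀ j k, ∃ m : ℤ, T16 j k = (m : ℂ)) ∧
    (∀ j, ∃ m : ℤ, T16 j j = (2 * m : ℤ)) ∧
    (T16.det = 1 ∨ T16.det = -1) ∧
    (∀ v : Fin 8 → ℝ, v ≠ 0 → 0 < ∑ j, ∑ k, v j * (T16 j k).re * v k) ∧
    (∃ P : Matrix (Fin 8) (Fin 8) ℤ, IsUnit P.det ∧
      (P.map (Int.cast : ℤ → ℂ))ᵀ * T16 * P.map (Int.cast : ℤ → ℂ) =
        E8Mat.map (Int.cast : ℤ → ℂ)) := by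
  rw [T16_eq_map_traceGramInt]
  refine ⟨fun j k => ⟨traceGramInt j k, rfl⟩, fun j => ⟨1, ?_⟩,
    det_map_intCast_eq_one_or_neg_one traceGramIntInv_mul, fun v hv => ?_,
    toE8Basis, isUnit_det_of_left_inverse toE8BasisInv_mul, ?_⟩
  · fin_cases j <;> rfl
  · simpa using traceGramInt_posDef.sum_mul_mul_pos hv
  · rw [← transpose_map, ← map_intCast_mul, ← map_intCast_mul,
      toE8Basis_transpose_mul_traceGramInt_mul]
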